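/- Let Q be a quiver, let C_1,…,C_r be its primitive oriented cycles (oriented cycles with no repeated vertices) with characteristic vectors ε_{C_1},…,ε_{C_r} ∈ {0,1}^{Q1}, and let S = {x ∈ ℕ^{Q1} : F(x) = 0} be the monoid of nonnegative integral circulations of Q (which is generated by ε_{C_1},…,ε_{C_r}). Let d be the rank of the subgroup of ℤ^{Q1} generated by S (equivalently, the dimension of the cone ∇(Q,0), i.e., the dimension of the affine toric quiver variety M(Q,0)), and assume d > 0. Then the kernel of the ℂ-algebra homomorphism φ : ℂ[t_1,…,t_r] → ℂ[x_a : a ∈ Q1], t_i ↦ x^{ε_{C_i}} = ∏_{a ∈ C_i} x_a, is generated by polynomials of total degree at most d − 1. -/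

import Mathlib

/-!
Write `σ u = ∑ uᵢ εᵢ` for the circulation carried by a multiset `u` of primitive cycles. The
kernel of `tᵢ ↦ x^{εᵢ}` is spanned by the binomials `t^u - t^v` with `σ u = σ v`, and each of
them is reduced to binomials of degree `< d` by induction on `σ u`. A cycle common to `u` and `v`
factors out as a variable. Otherwise, if `deg u ≥ d`, some cycle `i` of `u` and some cycle `j` of
`v` fit together into `σ u`: if not, the cycles of `u` have multiplicity one, each owns an arc of
flow one that it shares with a second cycle `j₁` of `v`, and together with a further cycle `j₀`
of `v` they are `deg u + 1` independent vectors in a lattice of rank `d` (when `v` is a single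
cycle, it contains, hence equals, a cycle of `u`). Decomposing the circulation `σ u - εᵢ - εⱼ`
into primitive cycles yields `w` with `σ w = σ u` sharing a cycle with both `u` and `v`, and
`t^u - t^v = (t^u - t^w) + (t^w - t^v)`.
-/

open MvPolynomial

open Classical in
/-- `x ∈ ℕ^{Q1}` is the characteristic vector of a primitive oriented cycle of the
quiver: an oriented cycle visiting no vertex twice. -/
def IsPrimitiveCycleVector {V A : Type} (s t : A → V) (x : A → ℕ) : Prop :=
  ∃ (n : ℕ) (f : Fin (n + 1) → A),
    Function.Injective (fun i => s (f i)) ∧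
    (∀ i : Fin (n + 1), t (f i) = s (f (i + 1))) ∧
    ∀ a : A, x a = if a ∈ Set.range f then 1 else 0

open Function in
lemma Set.MapsTo.exists_mem_periodicPts {α : Type*} {f : α → α} {S : Set α} (hS : S.Finite)
    (hf : Set.MapsTo f S S) {x : α} (hx : x ∈ S) : ∃ y ∈ S, y ∈ periodicPts f := by
  have := hS.to_subtype
  obtain ⟨k, l, hkl, heq⟩ :=
    Finite.exists_ne_map_eq_of_infinite fun n : ℕ => (⟨f^[n] x, hf.iterate n hx⟩ : S)
  wlog hlt : k < l generalizing k l
  · exact this l k hkl.symm heq.symm (by omega)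
  refine ⟨f^[k] x, hf.iterate k hx, mk_mem_periodicPts (Nat.sub_pos_of_lt hlt) ?_⟩
  rw [IsPeriodicPt, IsFixedPt, ← iterate_add_apply, Nat.sub_add_cancel hlt.le]
  exact (congrArg Subtype.val heq).symm

lemma linearIndependent_option_elim {R κ ι : Type*} [Ring R] [Fintype ι] {w : κ → R}
    {x : ι → κ → R} (hw : ∃ a, w a = 1) (hx : ∀ i, ∃ a, x i a = 1 ∧ w a = 0 ∧ ∀ j ≠ i, x j a = 0) :
    LinearIndependent R fun o : Option ι => o.elim w x := by
  rw [Fintype.linearIndependent_iff]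
  intro g hg
  have heval : ∀ a, g none * w a + ∑ i, g (some i) * x i a = 0 := fun a => by
    simpa [Fintype.sum_option, Finset.sum_apply] using congrFun hg a
  have hsome : ∀ i, g (some i) = 0 := fun i => by
    obtain ⟨a, hia, hwa, hja⟩ := hx i
    have := heval a
    rwa [hwa, mul_zero, zero_add, Finset.sum_eq_single i
      (fun j _ hji => by rw [hja j hji, mul_zero]) (by simp), hia, mul_one] at this
  rintro (_ | i)
  · obtain ⟨a, ha⟩ := hw
    simpa [hsome, ha] using heval a
  · exact hsome i

lemma Finsupp.degree_eq_card_support {ι : Type*} {u : ι →₀ ℕ} (hu : ∀ i, u i ≤ 1) :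
    u.degree = u.support.card := by
  rw [Finsupp.degree_apply, Finset.card_eq_sum_ones]
  exact Finset.sum_congr rfl fun i hi => le_antisymm (hu i) (Nat.one_le_iff_ne_zero.mpr
    (Finsupp.mem_support_iff.mp hi))

variable {V A : Type}

namespace IsPrimitiveCycleVector

variable {s t : A → V} {x y : A → ℕ}

lemma le_one (hx : IsPrimitiveCycleVector s t x) : x ≤ 1 := by
  obtain ⟨n, f, -, -, hx⟩ := hx
  intro a
  rw [hx a]
  split <;> simp

lemma exists_apply_eq_one (hx : IsPrimitiveCycleVector s t x) : ∃ a, x a = 1 := by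
  obtain ⟨n, f, -, -, hx⟩ := hx
  exact ⟨f 0, by simp [hx]⟩

lemma ne_zero (hx : IsPrimitiveCycleVector s t x) : x ≠ 0 := fun h => by
  obtain ⟨a, ha⟩ := hx.exists_apply_eq_one
  simp [h] at ha

lemma apply_eq_one_of_ne_zero (hx : IsPrimitiveCycleVector s t x) {a : A} (ha : x a ≠ 0) :
    x a = 1 :=
  le_antisymm (hx.le_one a) (Nat.one_le_iff_ne_zero.mpr ha)

open Fin.NatCast in
lemma eq_of_le (hx : IsPrimitiveCycleVector s t x) (hy : IsPrimitiveCycleVector s t y)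
    (hle : x ≤ y) : x = y := by
  obtain ⟨m, g, -, hg, hgx⟩ := hx
  obtain ⟨n, f, hfs, hf, hfy⟩ := hy
  have hsub : Set.range g ⊆ Set.range f := by
    rintro _ ⟨k, rfl⟩
    by_contra h
    simpa [hgx, hfy, h] using hle (g k)
  -- the arc of `f` after an arc of `g` is the arc of `g` after it, since sources along `f` differ
  have hsucc : ∀ l k, f l = g k → f (l + 1) ∈ Set.range g := by
    intro l k hlk
    obtain ⟨l', hl'⟩ := hsub ⟨k + 1, rfl⟩
    have : l' = l + 1 := hfs (by simp only [hl', ← hg k, ← hlk, hf l])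
    exact ⟨k + 1, by rw [← this, hl']⟩
  obtain ⟨l₀, hl₀⟩ := hsub ⟨0, rfl⟩
  have horbit : ∀ N : ℕ, f (l₀ + N) ∈ Set.range g := by
    intro N
    induction N with
    | zero => simpa using ⟨0, hl₀.symm⟩
    | succ N ih =>
      obtain ⟨k, hk⟩ := ih
      simpa [add_assoc] using hsucc _ k hk.symm
  have hrange : Set.range g = Set.range f := by
    refine hsub.antisymm ?_
    rintro _ ⟨l, rfl⟩
    simpa [Fin.cast_val_eq_self] using horbit (l - l₀).val
  funext a
  rw [hgx, hfy]
  split_ifs <;> simp_all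

end IsPrimitiveCycleVector

section Circulation

variable [Fintype A] [DecidableEq V]

def circulations (M : Type*) [AddCommMonoid M] (s t : A → V) : AddSubmonoid (A → M) where
  carrier := {x | ∀ v, (∑ a, if t a = v then x a else 0) = ∑ a, if s a = v then x a else 0}
  zero_mem' := by simp
  add_mem' {x y} hx hy v := by
    simp only [Pi.add_apply, ite_add_zero, Finset.sum_add_distrib, hx v, hy v]

variable {s t : A → V}

lemma comp_mem_circulations {M N : Type*} [AddCommMonoid M] [AddCommMonoid N] {x : A → M}
    (hx : x ∈ circulations M s t) (φ : M →+ N) : φ ∘ x ∈ circulations N s t := by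
  intro v
  simpa only [map_sum, apply_ite φ, map_zero, Function.comp_apply] using congrArg φ (hx v)

lemma tsub_mem_circulations {x y : A → ℕ} (hx : x ∈ circulations ℕ s t)
    (hy : y ∈ circulations ℕ s t) (hle : y ≤ x) : x - y ∈ circulations ℕ s t := by
  intro v
  have key : ∀ h : A → V, (∑ a, if h a = v then (x - y) a else 0) =
      (∑ a, if h a = v then x a else 0) - ∑ a, if h a = v then y a else 0 := by
    intro h
    rw [← Finset.sum_tsub_distrib _ fun a _ => by split_ifs <;> simp [hle a]]
    exact Finset.sum_congr rfl fun a _ => by split_ifs <;> simp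
  rw [key, key, hx v, hy v]

lemma exists_succ_of_mem_circulations {z : A → ℕ} (hz : z ∈ circulations ℕ s t) {a : A}
    (ha : z a ≠ 0) : ∃ b, z b ≠ 0 ∧ s b = t a := by
  by_contra! h
  have hin : z a ≤ ∑ b, if t b = t a then z b else 0 := by
    simpa using Finset.single_le_sum (f := fun b => if t b = t a then z b else 0) (by simp)
      (Finset.mem_univ a)
  have hout : (∑ b, if s b = t a then z b else 0) = 0 :=
    Finset.sum_eq_zero fun b _ => ite_eq_right_iff.mpr fun hb => by
      by_contra hzb
      exact h b hzb hb
  rw [hz (t a), hout] at hin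
  omega

lemma IsPrimitiveCycleVector.mem_circulations {x : A → ℕ} (hx : IsPrimitiveCycleVector s t x) :
    x ∈ circulations ℕ s t := by
  classical
  obtain ⟨n, f, hfs, hf, hx⟩ := hx
  have count : ∀ h : A → V, ∀ v, (∑ a, if h a = v then x a else 0) =
      ∑ k, if h (f k) = v then 1 else 0 := by
    intro h v
    rw [← Finset.sum_subset (Finset.subset_univ (Finset.univ.image f)) fun a _ ha => by
      simp_all, Finset.sum_image fun k _ l _ hkl => hfs (congrArg s hkl)]
    simp [hx]
  intro v
  rw [count, count]
  simp only [hf]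
  exact Equiv.sum_comp (Equiv.addRight 1) fun k => if s (f k) = v then 1 else 0

end Circulation

open Function in
lemma exists_isPrimitiveCycleVector_of_forall_exists_succ [Finite A] {s t : A → V} {P : A → Prop}
    (hP : ∀ a, P a → ∃ b, P b ∧ s b = t a) {a₀ : A} (ha₀ : P a₀) :
    ∃ x, IsPrimitiveCycleVector s t x ∧ ∀ a, x a ≠ 0 → P a := by
  classical
  have : Nonempty A := ⟨a₀⟩
  -- leaving every vertex through one fixed arc `out v`, a periodic orbit of vertices is a cycle
  -- without repeated vertices
  let out : V → A := fun v => Classical.epsilon fun b => P b ∧ s b = v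
  let good : Set V := {v | ∃ b, P b ∧ s b = v}
  have hout : ∀ v ∈ good, P (out v) ∧ s (out v) = v := fun v hv => Classical.epsilon_spec hv
  let φ : V → V := fun v => t (out v)
  have hmaps : Set.MapsTo φ good good := fun v hv => hP _ (hout v hv).1
  have hfin : good.Finite := (Set.finite_range s).subset fun v ⟨b, _, hb⟩ => ⟨b, hb⟩
  obtain ⟨w, hw, hper⟩ := hmaps.exists_mem_periodicPts hfin ⟨a₀, ha₀, rfl⟩
  obtain ⟨m, hm⟩ := Nat.exists_eq_add_one_of_ne_zero (minimalPeriod_pos_of_mem_periodicPts hper).ne'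
  let f : Fin (m + 1) → A := fun k => out (φ^[k] w)
  have hsf : ∀ k, s (f k) = φ^[k] w := fun k => (hout _ (hmaps.iterate k hw)).2
  refine ⟨fun a => if a ∈ Set.range f then 1 else 0, ⟨m, f, ?_, ?_, fun a => rfl⟩, ?_⟩
  · intro k l hkl
    simp only [hsf] at hkl
    have hlt : ∀ k : Fin (m + 1), (k : ℕ) ∈ Set.Iio (minimalPeriod φ w) := fun k => by
      simpa [hm] using k.isLt
    exact Fin.ext (iterate_injOn_Iio_minimalPeriod (hlt k) (hlt l) hkl)
  · intro k
    have hval : ((k + 1 : Fin (m + 1)) : ℕ) = ((k : ℕ) + 1) % minimalPeriod φ w := by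
      simp [hm, Fin.val_add]
    rw [hsf, hval, iterate_mod_minimalPeriod_eq, iterate_succ_apply']
  · rintro a ha
    obtain ⟨k, rfl⟩ : a ∈ Set.range f := by simpa using ha
    exact (hout _ (hmaps.iterate k hw)).1

section CycleSum

variable {ι : Type*} (ε : ι → A → ℕ)

noncomputable def cycleSum : (ι →₀ ℕ) →+ (A → ℕ) :=
  Finsupp.liftAddHom fun i => multiplesHom (A → ℕ) (ε i)

@[simp]
lemma cycleSum_single (i : ι) (k : ℕ) : cycleSum ε (Finsupp.single i k) = k • ε i := by
  simp [cycleSum]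

lemma cycleSum_eq_sum [Fintype ι] (u : ι →₀ ℕ) : cycleSum ε u = ∑ i, u i • ε i := by
  simp [cycleSum, Finsupp.sum_fintype]

lemma cycleSum_apply [Fintype ι] (u : ι →₀ ℕ) (a : A) :
    cycleSum ε u a = ∑ i, u i * ε i a := by
  simp [cycleSum_eq_sum]

variable {ε}

lemma smul_le_cycleSum [Fintype ι] (u : ι →₀ ℕ) (i : ι) : u i • ε i ≤ cycleSum ε u := by
  rw [cycleSum_eq_sum]
  exact Finset.single_le_sum (f := fun i => u i • ε i) (fun _ _ => zero_le) (Finset.mem_univ i)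

lemma le_cycleSum [Fintype ι] {u : ι →₀ ℕ} {i : ι} (hi : u i ≠ 0) : ε i ≤ cycleSum ε u :=
  (le_smul_of_one_le_left zero_le (Nat.one_le_iff_ne_zero.mpr hi)).trans (smul_le_cycleSum u i)

lemma cycleSum_eq_zero_iff [Fintype ι] (hε : ∀ i, ε i ≠ 0) {u : ι →₀ ℕ} :
    cycleSum ε u = 0 ↔ u = 0 := by
  refine ⟨fun h => ?_, fun h => by simp [h]⟩
  by_contra hu
  obtain ⟨i, hi⟩ := Finsupp.ne_iff.mp hu
  exact hε i (le_antisymm (h ▸ le_cycleSum hi) zero_le)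

variable [Fintype A] [DecidableEq V] {s t : A → V}

lemma cycleSum_mem_circulations (hε : ∀ i, ε i ∈ circulations ℕ s t) (u : ι →₀ ℕ) :
    cycleSum ε u ∈ circulations ℕ s t := by
  induction u using Finsupp.induction_linear with
  | zero => simp
  | add u w hu hw => simpa using add_mem hu hw
  | single i k => simpa using nsmul_mem (hε i) k

lemma exists_cycleSum_eq (hall : ∀ x, IsPrimitiveCycleVector s t x → ∃ i, x = ε i)
    {z : A → ℕ} (hz : z ∈ circulations ℕ s t) : ∃ w, cycleSum ε w = z := by
  induction z using WellFoundedLT.induction with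
  | _ z ih =>
  by_cases h0 : z = 0
  · exact ⟨0, by simp [h0]⟩
  obtain ⟨a₀, ha₀⟩ := Function.ne_iff.mp h0
  obtain ⟨x, hx, hxz⟩ := exists_isPrimitiveCycleVector_of_forall_exists_succ
    (fun a ha => exists_succ_of_mem_circulations hz ha) ha₀
  have hle : x ≤ z := fun a => by
    by_cases ha : x a = 0
    · simp [ha]
    · rw [hx.apply_eq_one_of_ne_zero ha]
      exact Nat.one_le_iff_ne_zero.mpr (hxz a ha)
  have hlt : z - x < z := by
    refine tsub_le_self.lt_of_ne fun h => hx.ne_zero ?_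
    simpa [h] using tsub_add_cancel_of_le hle
  obtain ⟨i, rfl⟩ := hall x hx
  obtain ⟨w, hw⟩ := ih _ hlt (tsub_mem_circulations hz hx.mem_circulations hle)
  exact ⟨w + Finsupp.single i 1, by simp [hw, tsub_add_cancel_of_le hle]⟩

end CycleSum

section Exchange

variable {ι : Type*} [Fintype ι] {ε : ι → A → ℕ} {u v : ι →₀ ℕ}

lemma apply_eq_zero_of_cycleSum_apply_eq_one {a : A} (ha : cycleSum ε u a = 1) {i k : ι}
    (hi : u i ≠ 0) (hia : ε i a ≠ 0) (hk : u k ≠ 0) (hki : k ≠ i) : ε k a = 0 := by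
  have hsum := Finset.add_le_sum (f := fun i => u i * ε i a) (fun _ _ => zero_le)
    (Finset.mem_univ i) (Finset.mem_univ k) hki.symm
  rw [← cycleSum_apply, ha] at hsum
  have : 0 < u i * ε i a := Nat.pos_of_ne_zero (mul_ne_zero hi hia)
  exact (mul_eq_zero.mp (by omega)).resolve_left hk

variable {s t : A → V} (hε : ∀ i, IsPrimitiveCycleVector s t (ε i))
include hε

lemma add_le_cycleSum_of_two_le (hσ : cycleSum ε u = cycleSum ε v) {i j : ι} (hi : 2 ≤ u i)
    (hj : v j ≠ 0) : ε i + ε j ≤ cycleSum ε u := fun a => by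
  have hui : u i * ε i a ≤ cycleSum ε u a := smul_le_cycleSum u i a
  have hvj : ε j a ≤ cycleSum ε u a := hσ ▸ le_cycleSum hj a
  have hia : ε i a ≤ 1 := (hε i).le_one a
  have hja : ε j a ≤ 1 := (hε j).le_one a
  show ε i a + ε j a ≤ cycleSum ε u a
  obtain h | h : ε i a = 0 ∨ ε i a = 1 := by omega
  · omega
  · rw [h] at hui ⊢
    omega

lemma exists_apply_eq_one_of_not_add_le (hσ : cycleSum ε u = cycleSum ε v) {i j : ι}
    (hi : u i ≠ 0) (hj : v j ≠ 0) (h : ¬ ε i + ε j ≤ cycleSum ε u) :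
    ∃ a, ε i a = 1 ∧ ε j a = 1 ∧ cycleSum ε u a = 1 := by
  rw [Pi.le_def, not_forall] at h
  obtain ⟨a, ha⟩ := h
  have hia : ε i a ≤ cycleSum ε u a := le_cycleSum hi a
  have hja : ε j a ≤ cycleSum ε u a := hσ ▸ le_cycleSum hj a
  have hi₁ : ε i a ≤ 1 := (hε i).le_one a
  have hj₁ : ε j a ≤ 1 := (hε j).le_one a
  rw [Pi.add_apply, not_le] at ha
  exact ⟨a, by omega, by omega, by omega⟩

lemma eq_of_cycleSum_eq_smul (hinj : Function.Injective ε) {i j : ι} {k : ℕ}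
    (hσ : cycleSum ε u = k • ε j) (hi : u i ≠ 0) : i = j := by
  refine hinj ((hε i).eq_of_le (hε j) fun a => ?_)
  have h : ε i a ≤ k * ε j a := by simpa [hσ] using le_cycleSum (ε := ε) hi a
  have hia : ε i a ≤ 1 := (hε i).le_one a
  have hja : ε j a ≤ 1 := (hε j).le_one a
  obtain h' | h' : ε j a = 0 ∨ ε j a = 1 := by omega
  · simpa [h'] using h
  · rw [h']
    exact hia

lemma degree_add_one_le_finrank [Finite A] (M : Submodule ℤ (A → ℤ))
    (hM : ∀ i, (fun a => (ε i a : ℤ)) ∈ M) (hσ : cycleSum ε u = cycleSum ε v)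
    (hu : ∀ i, u i ≤ 1) {j₀ j₁ : ι} (hj₀ : v j₀ ≠ 0) (hj₁ : v j₁ ≠ 0) (hj₁₀ : j₁ ≠ j₀)
    (hno : ∀ i, u i ≠ 0 → ¬ ε i + ε j₁ ≤ cycleSum ε u) :
    u.degree + 1 ≤ Module.finrank ℤ M := by
  -- each cycle of `u` shares with `j₁` an arc of flow one, used by no other cycle of `u` nor `j₀`
  have hpriv : ∀ i : u.support, ∃ a, (ε i a : ℤ) = 1 ∧ (ε j₀ a : ℤ) = 0 ∧
      ∀ k ≠ i, (ε k a : ℤ) = 0 := by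
    rintro ⟨i, hi⟩
    rw [Finsupp.mem_support_iff] at hi
    obtain ⟨a, hia, hj₁a, ha⟩ := exists_apply_eq_one_of_not_add_le hε hσ hi hj₁ (hno i hi)
    refine ⟨a, by simp [hia], ?_, fun ⟨k, hk⟩ hki => ?_⟩
    · simpa using apply_eq_zero_of_cycleSum_apply_eq_one (hσ ▸ ha) hj₁ (by simp [hj₁a]) hj₀
        hj₁₀.symm
    · simpa using apply_eq_zero_of_cycleSum_apply_eq_one ha hi (by simp [hia])
        (Finsupp.mem_support_iff.mp hk) fun h => hki (Subtype.ext h)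
  have hli := linearIndependent_option_elim (w := fun a => (ε j₀ a : ℤ))
    (x := fun (i : u.support) a => (ε i a : ℤ)) (by simpa using (hε j₀).exists_apply_eq_one) hpriv
  have hrange : Set.range (fun o : Option u.support => o.elim (fun a => (ε j₀ a : ℤ))
      fun i a => (ε i a : ℤ)) ⊆ M := by
    rintro _ ⟨_ | i, rfl⟩
    exacts [hM j₀, hM i]
  have := (finrank_span_eq_card hli).symm.le.trans
    (Submodule.finrank_mono (Submodule.span_le.mpr hrange))
  rwa [Fintype.card_option, Fintype.card_coe, ← Finsupp.degree_eq_card_support hu] at this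

lemma degree_lt_finrank_of_forall_not_add_le [Finite A] (M : Submodule ℤ (A → ℤ))
    (hM : ∀ i, (fun a => (ε i a : ℤ)) ∈ M) (hinj : Function.Injective ε)
    (hσ : cycleSum ε u = cycleSum ε v) (hu : u ≠ 0) (hdisj : ∀ i, u i = 0 ∨ v i = 0)
    (hno : ∀ i j, u i ≠ 0 → v j ≠ 0 → ¬ ε i + ε j ≤ cycleSum ε u) :
    u.degree < Module.finrank ℤ M := by
  obtain ⟨i₀, hi₀⟩ := Finsupp.ne_iff.mp hu
  obtain ⟨j₀, hj₀⟩ := Finsupp.ne_iff.mp fun hv : v = 0 => hu <|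
    (cycleSum_eq_zero_iff fun i => (hε i).ne_zero).mp (hσ.trans (by rw [hv, map_zero]))
  simp only [Finsupp.coe_zero, Pi.zero_apply] at hi₀ hj₀
  by_cases hv₁ : ∃ j₁, v j₁ ≠ 0 ∧ j₁ ≠ j₀
  · obtain ⟨j₁, hj₁, hj₁₀⟩ := hv₁
    have hu₁ : ∀ i, u i ≤ 1 := fun i => by
      by_contra h
      exact hno i j₀ (by omega) hj₀ (add_le_cycleSum_of_two_le hε hσ (by omega) hj₀)
    exact degree_add_one_le_finrank hε M hM hσ hu₁ hj₀ hj₁ hj₁₀ fun i hi => hno i j₁ hi hj₁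
  · have hv : cycleSum ε v = v j₀ • ε j₀ := by
      rw [cycleSum_eq_sum, Finset.sum_eq_single j₀ (fun j _ hj => ?_) (by simp)]
      simp [show v j = 0 by by_contra h; exact hv₁ ⟨j, h, hj⟩]
    obtain rfl := eq_of_cycleSum_eq_smul hε hinj (hσ.trans hv) hi₀
    exact ((hdisj i₀).elim hi₀ hj₀).elim

lemma exists_cycleSum_eq_of_finrank_le_degree [Fintype A] [DecidableEq V]
    (hall : ∀ x, IsPrimitiveCycleVector s t x → ∃ i, x = ε i) (hinj : Function.Injective ε)
    (M : Submodule ℤ (A → ℤ)) (hM : ∀ i, (fun a => (ε i a : ℤ)) ∈ M)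
    (hσ : cycleSum ε u = cycleSum ε v) (hdisj : ∀ i, u i = 0 ∨ v i = 0) (hu : u ≠ 0)
    (hd : Module.finrank ℤ M ≤ u.degree) :
    ∃ w, cycleSum ε w = cycleSum ε u ∧ (∃ i, u i ≠ 0 ∧ w i ≠ 0) ∧ ∃ j, v j ≠ 0 ∧ w j ≠ 0 := by
  obtain ⟨i, j, hi, hj, hle⟩ : ∃ i j, u i ≠ 0 ∧ v j ≠ 0 ∧ ε i + ε j ≤ cycleSum ε u := by
    by_contra! h
    exact (degree_lt_finrank_of_forall_not_add_le hε M hM hinj hσ hu hdisj h).not_ge hd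
  have hcirc : cycleSum ε u - (ε i + ε j) ∈ circulations ℕ s t :=
    tsub_mem_circulations (cycleSum_mem_circulations (fun i => (hε i).mem_circulations) u)
      (add_mem (hε i).mem_circulations (hε j).mem_circulations) hle
  obtain ⟨w, hw⟩ := exists_cycleSum_eq hall hcirc
  refine ⟨w + Finsupp.single i 1 + Finsupp.single j 1, ?_, ⟨i, hi, by simp⟩, ⟨j, hj, by simp⟩⟩
  simp [hw, add_assoc, tsub_add_cancel_of_le hle]

end Exchange

section Binomial

variable {ι κ : Type*} (R : Type*) [CommRing R]

noncomputable def binomial (u v : ι →₀ ℕ) : MvPolynomial ι R := monomial u 1 - monomial v 1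

variable {R}

lemma binomial_single_add (i : ι) (u v : ι →₀ ℕ) :
    binomial R (Finsupp.single i 1 + u) (Finsupp.single i 1 + v) = X i * binomial R u v := by
  simp [binomial, mul_sub, X, monomial_mul]

lemma binomial_mem_of_common_cycle {ε : ι → A → ℕ} (hε : ∀ i, ε i ≠ 0)
    {I : Ideal (MvPolynomial ι R)} {x : A → ℕ}
    (ih : ∀ y < x, ∀ u v, cycleSum ε u = y → cycleSum ε v = y → binomial R u v ∈ I)
    {u v : ι →₀ ℕ} (hu : cycleSum ε u = x) (hv : cycleSum ε v = x) {i : ι} (hui : u i ≠ 0)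
    (hvi : v i ≠ 0) : binomial R u v ∈ I := by
  have hsplit : ∀ w : ι →₀ ℕ, w i ≠ 0 → ∃ w', w = Finsupp.single i 1 + w' := fun w hw =>
    ⟨_, (add_tsub_cancel_of_le (Finsupp.single_le_iff.mpr (Nat.one_le_iff_ne_zero.mpr hw))).symm⟩
  obtain ⟨u', rfl⟩ := hsplit u hui
  obtain ⟨v', rfl⟩ := hsplit v hvi
  rw [binomial_single_add]
  simp only [map_add, cycleSum_single, one_smul] at hu hv
  refine I.mul_mem_left _ (ih _ ?_ _ _ rfl (add_left_cancel (hv.trans hu.symm)))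
  exact hu ▸ lt_add_of_pos_left _ (pos_iff_ne_zero.mpr (hε i))

lemma totalDegree_binomial_le (u v : ι →₀ ℕ) :
    (binomial R u v).totalDegree ≤ max u.degree v.degree :=
  (totalDegree_sub _ _).trans
    (max_le_max (totalDegree_monomial_le u 1) (totalDegree_monomial_le v 1))

lemma ker_eq_span_binomials (φ : MvPolynomial ι R →ₐ[R] MvPolynomial κ R)
    (e : (ι →₀ ℕ) → (κ →₀ ℕ)) (hφ : ∀ u, φ (monomial u 1) = monomial (e u) 1) :
    RingHom.ker φ = Ideal.span {p | ∃ u v, e u = e v ∧ binomial R u v = p} := by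
  set I := Ideal.span {p | ∃ u v, e u = e v ∧ binomial R u v = p}
  have hφ' : ∀ u c, φ (monomial u c) = monomial (e u) c := fun u c => by
    rw [← mul_one c, ← smul_eq_mul, ← smul_monomial, map_smul, hφ, smul_monomial]
  refine le_antisymm (fun p hp => ?_) (Ideal.span_le.mpr ?_)
  · -- `ψ` sends `x^m` back to a fixed monomial in the fibre of `e` over `m`
    let ψ : MvPolynomial κ R →ₗ[R] MvPolynomial ι R :=
      AddMonoidAlgebra.mapDomainLinearMap R R (Function.invFun e)
    have hψ : ∀ m c, ψ (monomial m c) = monomial (Function.invFun e m) c :=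
      fun m c => AddMonoidAlgebra.mapDomainLinearMap_single _ c m
    have key : ∀ q, q - ψ (φ q) ∈ I := by
      intro q
      induction q using MvPolynomial.induction_on' with
      | monomial u c =>
        have he : e (Function.invFun e (e u)) = e u := Function.invFun_eq ⟨u, rfl⟩
        have : monomial u c - ψ (φ (monomial u c)) =
            C c * binomial R u (Function.invFun e (e u)) := by
          rw [hφ', hψ, binomial, mul_sub, C_mul_monomial, C_mul_monomial, mul_one]
        rw [this]
        exact I.mul_mem_left _ (Ideal.subset_span ⟨_, _, he.symm, rfl⟩)
      | add p q hp hq => simpa [add_sub_add_comm] using add_mem hp hq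
    simpa [RingHom.mem_ker.mp hp] using key p
  · rintro _ ⟨u, v, he, rfl⟩
    simp [binomial, hφ, he]

end Binomial

section Toric

variable {ι : Type*} [Fintype ι] (R : Type*) [CommRing R] (ε : ι → A → ℕ)

lemma aeval_prod_X_pow_monomial [Fintype A] (u : ι →₀ ℕ) :
    aeval (fun i => ∏ a, (X a : MvPolynomial A R) ^ ε i a) (monomial u (1 : R)) =
      monomial (Finsupp.equivFunOnFinite.symm (cycleSum ε u)) 1 := by
  rw [aeval_monomial, monomial_eq, Finsupp.prod_fintype _ _ (by simp),
    Finsupp.prod_fintype _ _ (by simp)]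
  simp only [Finsupp.coe_equivFunOnFinite_symm, cycleSum_apply, ← Finset.prod_pow_eq_pow_sum,
    ← Finset.prod_pow, ← pow_mul, mul_comm (ε _ _), map_one, one_mul]
  exact Finset.prod_comm

def cycleBinomials (n : ℕ) : Set (MvPolynomial ι R) :=
  {p | ∃ u v, cycleSum ε u = cycleSum ε v ∧ u.degree ≤ n ∧ v.degree ≤ n ∧ binomial R u v = p}

variable {R ε} [Fintype A] [DecidableEq V] {s t : A → V}

lemma binomial_mem_span_cycleBinomials (hε : ∀ i, IsPrimitiveCycleVector s t (ε i))
    (hall : ∀ x, IsPrimitiveCycleVector s t x → ∃ i, x = ε i) (hinj : Function.Injective ε)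
    (M : Submodule ℤ (A → ℤ)) (hM : ∀ i, (fun a => (ε i a : ℤ)) ∈ M) {u v : ι →₀ ℕ}
    (hσ : cycleSum ε u = cycleSum ε v) :
    binomial R u v ∈ Ideal.span (cycleBinomials R ε (Module.finrank ℤ M - 1)) := by
  set I := Ideal.span (cycleBinomials R ε (Module.finrank ℤ M - 1))
  suffices ∀ x u v, cycleSum ε u = x → cycleSum ε v = x → binomial R u v ∈ I from
    this _ u v rfl hσ.symm
  intro x
  induction x using WellFoundedLT.induction with
  | _ x ih =>
  have hε₀ i : ε i ≠ 0 := (hε i).ne_zero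
  have bridge : ∀ u v, cycleSum ε u = x → cycleSum ε v = x → (∀ i, u i = 0 ∨ v i = 0) →
      ¬ u.degree ≤ Module.finrank ℤ M - 1 → binomial R u v ∈ I := by
    intro u v hu hv hdisj hdeg
    have hu0 : u ≠ 0 := by rintro rfl; simp at hdeg
    obtain ⟨w, hw, ⟨i, hui, hwi⟩, ⟨j, hvj, hwj⟩⟩ := exists_cycleSum_eq_of_finrank_le_degree hε
      hall hinj M hM (hu.trans hv.symm) hdisj hu0 (by omega)
    rw [binomial, ← sub_add_sub_cancel _ (monomial w 1)]
    exact add_mem (binomial_mem_of_common_cycle hε₀ ih hu (hw.trans hu) hui hwi)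
      (binomial_mem_of_common_cycle hε₀ ih (hw.trans hu) hv hwj hvj)
  intro u v hu hv
  by_cases hshare : ∃ i, u i ≠ 0 ∧ v i ≠ 0
  · obtain ⟨i, hui, hvi⟩ := hshare
    exact binomial_mem_of_common_cycle hε₀ ih hu hv hui hvi
  simp only [not_exists, not_and_or, not_not] at hshare
  by_cases hsmall : u.degree ≤ Module.finrank ℤ M - 1 ∧ v.degree ≤ Module.finrank ℤ M - 1
  · exact Ideal.subset_span ⟨u, v, hu.trans hv.symm, hsmall.1, hsmall.2, rfl⟩
  rcases not_and_or.mp hsmall with h | h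
  · exact bridge u v hu hv hshare h
  · simpa only [binomial, neg_sub] using I.neg_mem (bridge v u hv hu (fun i => (hshare i).symm) h)

end Toric

theorem stmt18_general {V A : Type} [Fintype A] [DecidableEq V]
    (s t : A → V) (r : ℕ) (ε : Fin r → (A → ℕ))
    (hε : ∀ i, IsPrimitiveCycleVector s t (ε i))
    (hall : ∀ x : A → ℕ, IsPrimitiveCycleVector s t x → ∃ i, x = ε i)
    (hinj : Function.Injective ε)
    (d : ℕ)
    (hdim : d = Module.finrank ℤ ↥(Submodule.span ℤ
      {x : A → ℤ | (∀ a, 0 ≤ x a) ∧ ∀ v : V,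
        (∑ a : A, if t a = v then x a else 0) - (∑ a : A, if s a = v then x a else 0) = 0})) :
    ∃ G : Set (MvPolynomial (Fin r) ℂ),
      (∀ p ∈ G, p.totalDegree ≤ d - 1) ∧
      Ideal.span G = RingHom.ker (MvPolynomial.aeval (R := ℂ)
        (fun i : Fin r => ∏ a : A, (X a : MvPolynomial A ℂ) ^ (ε i a))) := by
  have hM : ∀ i, (fun a => (ε i a : ℤ)) ∈ Submodule.span ℤ {x : A → ℤ | (∀ a, 0 ≤ x a) ∧
      ∀ v : V, (∑ a : A, if t a = v then x a else 0) - (∑ a : A, if s a = v then x a else 0) = 0} :=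
    fun i => Submodule.subset_span ⟨fun a => by positivity, fun v => sub_eq_zero.mpr
      (comp_mem_circulations (hε i).mem_circulations (Nat.castAddMonoidHom ℤ) v)⟩
  refine ⟨cycleBinomials ℂ ε (d - 1), ?_, ?_⟩
  · rintro _ ⟨u, v, -, hu, hv, rfl⟩
    exact (totalDegree_binomial_le u v).trans (max_le hu hv)
  rw [ker_eq_span_binomials _ _ (aeval_prod_X_pow_monomial ℂ ε)]
  refine le_antisymm (Ideal.span_mono ?_) (Ideal.span_le.mpr ?_)
  · rintro _ ⟨u, v, huv, -, -, rfl⟩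
    exact ⟨u, v, by rw [huv], rfl⟩
  · rintro _ ⟨u, v, huv, rfl⟩
    exact hdim ▸ binomial_mem_span_cycleBinomials hε hall hinj _ hM
      (Finsupp.equivFunOnFinite.symm.injective huv)

/-- let `ε 1, …, ε r` be the characteristic vectors of the primitive
cycles of a quiver `Q` and `d > 0` the rank of the group generated by the monoid of
nonnegative integral circulations. Then the kernel of
`φ : ℂ[t_1, …, t_r] → ℂ[x_a]`, `t_i ↦ x^{ε i}`, is generated by polynomials of total
degree at most `d - 1`. -/
theorem stmt18 {V A : Type} [Fintype V] [Fintype A] [DecidableEq V] [DecidableEq A]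
    (s t : A → V) (r : ℕ) (ε : Fin r → (A → ℕ))
    (hε : ∀ i, IsPrimitiveCycleVector s t (ε i))
    (hall : ∀ x : A → ℕ, IsPrimitiveCycleVector s t x → ∃ i, x = ε i)
    (hinj : Function.Injective ε)
    (d : ℕ) (hd : 0 < d)
    (hdim : d = Module.finrank ℤ ↥(Submodule.span ℤ
      {x : A → ℤ | (∀ a, 0 ≤ x a) ∧ ∀ v : V,
        (∑ a : A, if t a = v then x a else 0) - (∑ a : A, if s a = v then x a else 0) = 0})) :
    ∃ G : Set (MvPolynomial (Fin r) ℂ),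
      (∀ p ∈ G, p.totalDegree ≤ d - 1) ∧
      Ideal.span G = RingHom.ker (MvPolynomial.aeval (R := ℂ)
        (fun i : Fin r => ∏ a : A, (X a : MvPolynomial A ℂ) ^ (ε i a))) :=
  stmt18_general s t r ε hε hall hinj d hdim
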